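/- arXiv:1711.06544 — 2 statements merged into one kernel-verified Lean document; each statement's English description precedes it below -/
import Mathlib

section
/- There exists a compact set F_2 ⊆ ℝ^2 with box dimension exactly 3/2 such that for every t ∈ (0,1), F_2 contains the boundary of an axis-aligned square of side length t. -/
open Set Metric MeasureTheory Filter Topology
open scoped ENNReal

/-- Minimal number of closed balls of radius `r` needed to cover `F`. -/
noncomputable def coverNum {X : Type*} [PseudoMetricSpace X] (F : Set X) (r : ℝ) : ℕ :=
  sInf {m : ℕ | ∃ s : Finset X, s.card = m ∧ F ⊆ ⋃ x ∈ s, closedBall x r}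

/-- Lower box(-counting) dimension. -/
noncomputable def lowerBoxDim {X : Type*} [PseudoMetricSpace X] (F : Set X) : ℝ :=
  liminf (fun r : ℝ => Real.log (coverNum F r) / (- Real.log r)) (𝓝[>] 0)

/-- Upper box(-counting) dimension. -/
noncomputable def upperBoxDim {X : Type*} [PseudoMetricSpace X] (F : Set X) : ℝ :=
  limsup (fun r : ℝ => Real.log (coverNum F r) / (- Real.log r)) (𝓝[>] 0)

/-- Assouad dimension. -/
noncomputable def assouadDim {X : Type*} [PseudoMetricSpace X] (F : Set X) : ℝ :=
  sInf {s : ℝ | 0 ≤ s ∧ ∃ C > 0, ∀ x ∈ F, ∀ R > 0, ∀ r : ℝ, 0 < r → r < R →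
    (coverNum (F ∩ closedBall x R) r : ℝ) ≤ C * (R / r) ^ s}

/-!
Let `E ⊆ [0,1]` be the union of the two Cantor sets of base-`4` expansions with all digits in
`{0, 2}`, resp. in `{2, 3}`. Every base-`4` digit `t_i` of `t ∈ [0,1]` can be written as
`c_i - a_i` with `a_i ∈ {0, 2}` and `c_i ∈ {2, 3}`, without carries, so some `a` has `a, a + t ∈ E`,
and then `F = E × [0,1] ∪ [0,1] × E` contains the boundary of the square `[a, a + t]²`.
At scale `4⁻ᵏ` the set `E` is covered by `2 · 2ᵏ` intervals and contains `2ᵏ` separated points,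
so `F` needs between `8ᵏ` and `4 · 8ᵏ` balls: its box dimension is `log 8 / log 4 = 3/2`.
-/

section CoverNum

variable {X Y : Type*} [PseudoMetricSpace X] [PseudoMetricSpace Y] {S T : Set X} {r r' : ℝ}

lemma coverNum_le_card {s : Finset X} (h : S ⊆ ⋃ x ∈ s, closedBall x r) : coverNum S r ≤ s.card :=
  Nat.sInf_le ⟨s, rfl, h⟩

lemma exists_finset_card_eq_coverNum (hS : TotallyBounded S) (hr : 0 < r) :
    ∃ s : Finset X, s.card = coverNum S r ∧ S ⊆ ⋃ x ∈ s, closedBall x r := by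
  obtain ⟨t, ht, hSt⟩ := Metric.totallyBounded_iff.1 hS r hr
  refine Nat.sInf_mem (s := {m | ∃ s : Finset X, s.card = m ∧ S ⊆ ⋃ x ∈ s, closedBall x r})
    ⟨_, ht.toFinset, rfl, hSt.trans ?_⟩
  simp only [Finite.mem_toFinset]
  exact iUnion₂_mono fun x _ => ball_subset_closedBall

lemma coverNum_anti (hS : TotallyBounded S) (hr : 0 < r) (hrr' : r ≤ r') :
    coverNum S r' ≤ coverNum S r := by
  obtain ⟨s, hs, hSs⟩ := exists_finset_card_eq_coverNum hS hr
  exact hs ▸ coverNum_le_card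
    (hSs.trans (iUnion₂_mono fun x _ => closedBall_subset_closedBall hrr'))

lemma coverNum_union_le (hS : TotallyBounded S) (hT : TotallyBounded T) (hr : 0 < r) :
    coverNum (S ∪ T) r ≤ coverNum S r + coverNum T r := by
  classical
  obtain ⟨s, hs, hSs⟩ := exists_finset_card_eq_coverNum hS hr
  obtain ⟨t, ht, hTt⟩ := exists_finset_card_eq_coverNum hT hr
  rw [← hs, ← ht]
  refine (coverNum_le_card ?_).trans (Finset.card_union_le s t)
  rw [Finset.set_biUnion_union]
  exact union_subset_union hSs hTt

lemma coverNum_prod_le {T : Set Y} (hS : TotallyBounded S) (hT : TotallyBounded T) (hr : 0 < r) :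
    coverNum (S ×ˢ T) r ≤ coverNum S r * coverNum T r := by
  obtain ⟨s, hs, hSs⟩ := exists_finset_card_eq_coverNum hS hr
  obtain ⟨t, ht, hTt⟩ := exists_finset_card_eq_coverNum hT hr
  rw [← hs, ← ht, ← Finset.card_product]
  refine coverNum_le_card ?_
  rintro p ⟨hp₁, hp₂⟩
  obtain ⟨x, hx, hpx⟩ := mem_iUnion₂.1 (hSs hp₁)
  obtain ⟨y, hy, hpy⟩ := mem_iUnion₂.1 (hTt hp₂)
  exact mem_iUnion₂.2
    ⟨(x, y), Finset.mem_product.2 ⟨hx, hy⟩, closedBall_prod_same x y r ▸ ⟨hpx, hpy⟩⟩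

lemma card_le_coverNum {P : Finset X} (hS : TotallyBounded S) (hr : 0 < r) (hPS : ↑P ⊆ S)
    (hP : (P : Set X).Pairwise fun p q => 2 * r < dist p q) : P.card ≤ coverNum S r := by
  obtain ⟨s, hs, hSs⟩ := exists_finset_card_eq_coverNum hS hr
  have hcenter : ∀ p ∈ P, ∃ x ∈ s, p ∈ closedBall x r := fun p hp => by
    simpa using hSs (hPS hp)
  choose! f hfs hpf using hcenter
  rw [← hs]
  refine Finset.card_le_card_of_injOn f hfs fun p hp q hq hpq => by_contra fun hne => ?_
  have hp' := mem_closedBall.1 (hpf p hp)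
  have hq' := mem_closedBall.1 (hpf q hq)
  rw [← hpq] at hq'
  linarith [hP hp hq hne, dist_triangle_right p q (f p)]

lemma Set.Pairwise.le_dist_prod {δ : ℝ} {P : Set X} {Q : Set Y}
    (hP : P.Pairwise fun p q => δ ≤ dist p q) (hQ : Q.Pairwise fun p q => δ ≤ dist p q) :
    (P ×ˢ Q).Pairwise fun p q => δ ≤ dist p q := by
  rintro ⟨p₁, p₂⟩ ⟨hp₁, hp₂⟩ ⟨q₁, q₂⟩ ⟨hq₁, hq₂⟩ hpq
  rw [Prod.dist_eq]
  by_cases h : p₁ = q₁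
  · exact (hQ hp₂ hq₂ fun h' => hpq (Prod.ext h h')).trans (le_max_right _ _)
  · exact (hP hp₁ hq₁ h).trans (le_max_left _ _)

end CoverNum

open Real

section DigitSet

variable {b : ℕ}

def digitSet (D : Set (Fin b)) : Set ℝ := ofDigits '' univ.pi fun _ => D

lemma isCompact_digitSet (D : Set (Fin b)) : IsCompact (digitSet D) :=
  (isCompact_univ_pi fun _ => D.toFinite.isCompact).image continuous_ofDigits

lemma digitSet_subset_Icc (D : Set (Fin b)) : digitSet D ⊆ Icc 0 1 := by
  rintro _ ⟨d, -, rfl⟩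
  exact ⟨ofDigits_nonneg d, ofDigits_le_one d⟩

lemma digitSet_univ (hb : 1 < b) : digitSet (univ : Set (Fin b)) = Icc 0 1 :=
  (digitSet_subset_Icc _).antisymm fun x hx => by
    simpa [digitSet] using ofDigits_SurjOn hb hx

lemma ofDigits_eq_add {x y z : ℕ → Fin b} (h : ∀ i, ((x i : ℕ) : ℝ) = (y i : ℕ) + (z i : ℕ)) :
    ofDigits x = ofDigits y + ofDigits z := by
  rw [ofDigits, ofDigits, ofDigits, ← summable_ofDigitsTerm.tsum_add summable_ofDigitsTerm]
  congr 1 with i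
  simp only [ofDigitsTerm, h]
  ring

lemma inv_pow_le_ofDigits_sub {x y : ℕ → Fin b} {j : ℕ} (hxy : ∀ i < j, x i = y i)
    (hj : (y j : ℕ) + 2 ≤ x j) : ((b : ℝ) ^ (j + 1))⁻¹ ≤ ofDigits x - ofDigits y := by
  have hprefix : ∑ i ∈ Finset.range j, ofDigitsTerm x i = ∑ i ∈ Finset.range j, ofDigitsTerm y i :=
    Finset.sum_congr rfl fun i hi => by
      rw [ofDigitsTerm, hxy i (Finset.mem_range.1 hi), ofDigitsTerm]
  have hgap : 2 * ((b : ℝ) ^ (j + 1))⁻¹ ≤ ofDigitsTerm x j - ofDigitsTerm y j := by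
    rw [ofDigitsTerm, ofDigitsTerm, ← sub_mul]
    gcongr
    rw [le_sub_iff_add_le']
    exact_mod_cast hj
  rw [ofDigits_eq_sum_add_ofDigits x (j + 1), ofDigits_eq_sum_add_ofDigits y (j + 1),
    Finset.sum_range_succ, Finset.sum_range_succ, hprefix]
  have := ofDigits_nonneg fun i => x (i + (j + 1))
  have := ofDigits_le_one fun i => y (i + (j + 1))
  have : 0 ≤ ((b : ℝ) ^ (j + 1))⁻¹ := by positivity
  nlinarith

lemma inv_pow_le_dist_ofDigits {D : Set (Fin b)}
    (hD : ∀ d ∈ D, ∀ d' ∈ D, d < d' → (d : ℕ) + 2 ≤ d') {x y : ℕ → Fin b}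
    (hx : ∀ i, x i ∈ D) (hy : ∀ i, y i ∈ D) {k : ℕ} (htail : ∀ i ≥ k, x i = y i) (hxy : x ≠ y) :
    ((b : ℝ) ^ k)⁻¹ ≤ dist (ofDigits x) (ofDigits y) := by
  have hex : ∃ i, x i ≠ y i := Function.ne_iff.1 hxy
  set j := Nat.find hex
  have hjk : j < k := lt_of_not_ge fun h => Nat.find_spec hex (htail j h)
  have hbelow : ∀ i < j, x i = y i := fun i hi => not_not.1 (Nat.find_min hex hi)
  have hj : ((b : ℝ) ^ (j + 1))⁻¹ ≤ dist (ofDigits x) (ofDigits y) := by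
    rw [Real.dist_eq]
    rcases lt_or_gt_of_ne (Nat.find_spec hex) with h | h
    · rw [abs_sub_comm]
      exact (inv_pow_le_ofDigits_sub (fun i hi => (hbelow i hi).symm)
        (hD _ (hx j) _ (hy j) h)).trans (le_abs_self _)
    · exact (inv_pow_le_ofDigits_sub hbelow (hD _ (hy j) _ (hx j) h)).trans (le_abs_self _)
  have hb : (1 : ℝ) ≤ b := by exact_mod_cast (x 0).pos
  calc ((b : ℝ) ^ k)⁻¹
      ≤ ((b : ℝ) ^ (j + 1))⁻¹ := inv_anti₀ (by positivity) (pow_le_pow_right₀ hb hjk)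
    _ ≤ _ := hj

variable [NeZero b]

def padDigits {k : ℕ} (e : Fin k → Fin b) (i : ℕ) : Fin b := if h : i < k then e ⟨i, h⟩ else 0

lemma coverNum_digitSet_le (D : Finset (Fin b)) (k : ℕ) :
    coverNum (digitSet (D : Set (Fin b))) ((b : ℝ) ^ k)⁻¹ ≤ D.card ^ k := by
  classical
  refine (coverNum_le_card (s := (Fintype.piFinset fun _ : Fin k => D).image
    fun e => ofDigits (padDigits e)) ?_).trans ?_
  · rintro _ ⟨d, hd, rfl⟩
    refine mem_iUnion₂.2 ⟨_, Finset.mem_image_of_mem _ (a := fun i : Fin k => d i) ?_, ?_⟩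
    · simpa using fun i : Fin k => hd i trivial
    · rw [mem_closedBall, Real.dist_eq]
      exact abs_ofDigits_sub_ofDigits_le fun i hi => by simp [padDigits, hi]
  · exact Finset.card_image_le.trans (by simp)

lemma exists_separated_subset_digitSet (D : Finset (Fin b)) (hD0 : 0 ∈ D)
    (hD : ∀ d ∈ D, ∀ d' ∈ D, d < d' → (d : ℕ) + 2 ≤ d') (k : ℕ) :
    ∃ P : Finset ℝ, ↑P ⊆ digitSet (D : Set (Fin b)) ∧ P.card = D.card ^ k ∧
      (P : Set ℝ).Pairwise fun p q => ((b : ℝ) ^ k)⁻¹ ≤ dist p q := by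
  classical
  have hpad : ∀ e ∈ Fintype.piFinset fun _ : Fin k => D, ∀ i, padDigits e i ∈ D := by
    intro e he i
    unfold padDigits
    split_ifs
    exacts [Fintype.mem_piFinset.1 he _, hD0]
  have hsep : ∀ e ∈ Fintype.piFinset fun _ : Fin k => D, ∀ e' ∈ Fintype.piFinset fun _ : Fin k => D,
      e ≠ e' → ((b : ℝ) ^ k)⁻¹ ≤ dist (ofDigits (padDigits e)) (ofDigits (padDigits e')) := by
    refine fun e he e' he' hne => inv_pow_le_dist_ofDigits hD (hpad e he) (hpad e' he')
      (fun i hi => by simp [padDigits, not_lt.2 hi]) fun h => hne (funext fun i => ?_)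
    simpa [padDigits] using congrFun h i
  refine ⟨(Fintype.piFinset fun _ : Fin k => D).image fun e => ofDigits (padDigits e), ?_, ?_, ?_⟩
  · intro p hp
    obtain ⟨e, he, rfl⟩ := Finset.mem_image.1 hp
    exact ⟨_, fun i _ => hpad e he i, rfl⟩
  · rw [Finset.card_image_of_injOn, Fintype.card_piFinset, Finset.prod_const, Finset.card_univ,
      Fintype.card_fin]
    have hb : (0 : ℝ) < b := by exact_mod_cast Nat.pos_of_neZero b
    refine fun e he e' he' h => by_contra fun hne => ?_
    have := hsep e he e' he' hne
    rw [show ofDigits (padDigits e) = ofDigits (padDigits e') from h, dist_self] at this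
    exact this.not_gt (by positivity)
  · intro p hp q hq hpq
    obtain ⟨e, he, rfl⟩ := Finset.mem_image.1 hp
    obtain ⟨e', he', rfl⟩ := Finset.mem_image.1 hq
    exact hsep e he e' he' fun h => hpq (h ▸ rfl)

end DigitSet

lemma exists_separated_subset_Icc (n : ℕ) :
    ∃ P : Finset ℝ, (P : Set ℝ) ⊆ Icc 0 1 ∧ P.card = n ∧
      (P : Set ℝ).Pairwise fun p q => (n : ℝ)⁻¹ ≤ dist p q := by
  refine ⟨(Finset.range n).image fun j : ℕ => (j : ℝ) / n, ?_, ?_, ?_⟩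
  · intro p hp
    obtain ⟨j, hj, rfl⟩ := Finset.mem_image.1 hp
    have hjn : (j : ℝ) < n := by exact_mod_cast Finset.mem_range.1 hj
    exact ⟨by positivity, (div_le_one (by linarith [(j.cast_nonneg : (0 : ℝ) ≤ j)])).2 hjn.le⟩
  · rw [Finset.card_image_of_injOn, Finset.card_range]
    intro i hi j _ h
    have hn : (n : ℝ) ≠ 0 := by
      exact_mod_cast (Nat.zero_lt_of_lt (Finset.mem_range.1 hi)).ne'
    exact_mod_cast (div_left_inj' hn).1 h
  · intro p hp q hq hpq
    obtain ⟨i, -, rfl⟩ := Finset.mem_image.1 hp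
    obtain ⟨j, -, rfl⟩ := Finset.mem_image.1 hq
    have hij : i ≠ j := fun h => hpq (h ▸ rfl)
    have : (1 : ℝ) ≤ |(i : ℝ) - j| := by
      exact_mod_cast Int.one_le_abs (sub_ne_zero.2 (Int.natCast_inj.not.2 hij))
    rw [Real.dist_eq, ← sub_div, abs_div, Nat.abs_cast, inv_eq_one_div]
    gcongr

lemma tendsto_div_of_abs_sub_mul_le {α : Type*} {l : Filter α} {f g : α → ℝ} {s K : ℝ}
    (hg : Tendsto g l atTop) (h : ∀ᶠ x in l, |f x - s * g x| ≤ K) :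
    Tendsto (fun x => f x / g x) l (𝓝 s) := by
  have hK : Tendsto (fun x => K / g x) l (𝓝 0) := tendsto_const_nhds.div_atTop hg
  have hev := h.and (hg.eventually_gt_atTop 0)
  refine tendsto_of_tendsto_of_tendsto_of_le_of_le' (by simpa using tendsto_const_nhds.sub hK)
    (by simpa using tendsto_const_nhds.add hK) (hev.mono fun x ⟨hx, hgx⟩ => ?_)
    (hev.mono fun x ⟨hx, hgx⟩ => ?_)
  · rw [le_div_iff₀ hgx, sub_mul, div_mul_cancel₀ _ hgx.ne']
    linarith [abs_le.1 hx]
  · rw [div_le_iff₀ hgx, add_mul, div_mul_cancel₀ _ hgx.ne']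
    linarith [abs_le.1 hx]

lemma exists_pow_succ_le_inv_lt {a r : ℝ} (ha : 1 < a) (hr : 0 < r) (hra : r < a⁻¹) :
    ∃ m : ℕ, a ^ (m + 1) ≤ r⁻¹ ∧ r⁻¹ < a ^ (m + 2) := by
  have har : a < r⁻¹ := (lt_inv_comm₀ hr (zero_lt_one.trans ha)).1 hra
  obtain ⟨n, hn, hn'⟩ := exists_nat_pow_near (ha.trans har).le ha
  obtain ⟨m, rfl⟩ : ∃ m, n = m + 1 := Nat.exists_eq_add_one.2 <| Nat.pos_of_ne_zero <| by
    rintro rfl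
    rw [zero_add, pow_one] at hn'
    exact hn'.not_gt har
  exact ⟨m, hn, hn'⟩

lemma abs_log_sub_mul_neg_log_le {N : ℝ → ℝ} {a b C r : ℝ} (ha : 1 < a) (hb : 1 ≤ b)
    (hup : ∀ (k : ℕ) r, (a ^ k)⁻¹ ≤ r → N r ≤ C * b ^ k)
    (hlow : ∀ (k : ℕ) r, 0 < r → r ≤ (a ^ (k + 1))⁻¹ → b ^ k ≤ N r) (hr : 0 < r) (hra : r < a⁻¹) :
    |Real.log (N r) - Real.log b / Real.log a * -Real.log r| ≤ |Real.log C| + 2 * Real.log b := by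
  obtain ⟨m, hm, hm'⟩ := exists_pow_succ_le_inv_lt ha hr hra
  have hNlow : b ^ m ≤ N r := hlow m r hr (by rwa [le_inv_comm₀ hr (by positivity)])
  have hNup : N r ≤ C * b ^ (m + 2) := hup (m + 2) r ((inv_le_comm₀ (by positivity) hr).2 hm'.le)
  have hNpos : 0 < N r := (pow_pos (zero_lt_one.trans_le hb) m).trans_le hNlow
  have hCpos : 0 < C := pos_of_mul_pos_left (hNpos.trans_le hNup) (by positivity)
  have hlogN_low : m * Real.log b ≤ Real.log (N r) := by
    rw [← Real.log_pow]
    exact Real.log_le_log (by positivity) hNlow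
  have hlogN_up : Real.log (N r) ≤ Real.log C + (m + 2) * Real.log b := by
    have := Real.log_le_log hNpos hNup
    rw [Real.log_mul hCpos.ne' (by positivity), Real.log_pow] at this
    exact_mod_cast this
  have hlogr_low : (m + 1) * Real.log a ≤ -Real.log r := by
    have := Real.log_le_log (by positivity) hm
    rw [Real.log_pow, Real.log_inv] at this
    exact_mod_cast this
  have hlogr_up : -Real.log r ≤ (m + 2) * Real.log a := by
    have := Real.log_le_log (by positivity) hm'.le
    rw [Real.log_pow, Real.log_inv] at this
    exact_mod_cast this
  have hloga : 0 < Real.log a := Real.log_pos ha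
  have hs : Real.log b / Real.log a * Real.log a = Real.log b := div_mul_cancel₀ _ hloga.ne'
  have hs0 : 0 ≤ Real.log b / Real.log a := div_nonneg (Real.log_nonneg hb) hloga.le
  have h₁ := mul_le_mul_of_nonneg_left hlogr_low hs0
  have h₂ := mul_le_mul_of_nonneg_left hlogr_up hs0
  rw [abs_le]
  constructor <;> nlinarith [le_abs_self (Real.log C), neg_abs_le (Real.log C), Real.log_nonneg hb]

lemma tendsto_log_div_neg_log_of_pow_bounds {N : ℝ → ℝ} {a b C : ℝ} (ha : 1 < a) (hb : 1 ≤ b)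
    (hup : ∀ (k : ℕ) r, (a ^ k)⁻¹ ≤ r → N r ≤ C * b ^ k)
    (hlow : ∀ (k : ℕ) r, 0 < r → r ≤ (a ^ (k + 1))⁻¹ → b ^ k ≤ N r) :
    Tendsto (fun r => Real.log (N r) / -Real.log r) (𝓝[>] 0) (𝓝 (Real.log b / Real.log a)) := by
  refine tendsto_div_of_abs_sub_mul_le (K := |Real.log C| + 2 * Real.log b)
    (tendsto_neg_atBot_atTop.comp tendsto_log_nhdsGT_zero) ?_
  filter_upwards [Ioo_mem_nhdsGT (inv_pos.2 (zero_lt_one.trans ha))] with r ⟨hr, hra⟩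
  exact abs_log_sub_mul_neg_log_le ha hb hup hlow hr hra

namespace SquareBoundarySet

def E : Set ℝ :=
  digitSet (({0, 2} : Finset (Fin 4)) : Set (Fin 4)) ∪
    digitSet (({2, 3} : Finset (Fin 4)) : Set (Fin 4))

def F : Set (ℝ × ℝ) := E ×ˢ Icc 0 1 ∪ Icc 0 1 ×ˢ E

lemma E_subset_Icc : E ⊆ Icc 0 1 := union_subset (digitSet_subset_Icc _) (digitSet_subset_Icc _)

lemma isCompact_E : IsCompact E := (isCompact_digitSet _).union (isCompact_digitSet _)

lemma isCompact_F : IsCompact F :=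
  (isCompact_E.prod isCompact_Icc).union (isCompact_Icc.prod isCompact_E)

lemma exists_mem_E_add_mem_E {t : ℝ} (ht : t ∈ Icc 0 1) : ∃ a ∈ E, a + t ∈ E := by
  obtain ⟨d, -, rfl⟩ := ofDigits_SurjOn (b := 4) (by norm_num) ht
  have hdigit : ∀ j : Fin 4, (if j < 2 then 2 else 0 : Fin 4) ∈ ({0, 2} : Finset (Fin 4)) ∧
      (if j < 2 then j + 2 else j : Fin 4) ∈ ({2, 3} : Finset (Fin 4)) ∧
      ((if j < 2 then j + 2 else j : Fin 4) : ℕ) = ((if j < 2 then 2 else 0 : Fin 4) : ℕ) + j := by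
    decide
  refine ⟨_, Or.inl ⟨_, fun i _ => (hdigit (d i)).1, rfl⟩,
    Or.inr ⟨_, fun i _ => (hdigit (d i)).2.1, ofDigits_eq_add fun i => ?_⟩⟩
  exact_mod_cast (hdigit (d i)).2.2

lemma exists_sphere_subset_F {t : ℝ} (ht : t ∈ Icc 0 1) : ∃ c, sphere c (t / 2) ⊆ F := by
  obtain ⟨a, ha, hat⟩ := exists_mem_E_add_mem_E ht
  have hsphere : sphere (a + t / 2) (t / 2) ⊆ E := by
    intro x hx
    rw [mem_sphere, Real.dist_eq, abs_eq (by linarith [ht.1])] at hx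
    rcases hx with hx | hx
    · convert hat using 1; linarith
    · convert ha using 1; linarith
  have hball : closedBall (a + t / 2) (t / 2) ⊆ Icc 0 1 := by
    rw [Real.closedBall_eq_Icc]
    exact Icc_subset_Icc (by linarith [(E_subset_Icc ha).1]) (by linarith [(E_subset_Icc hat).2])
  refine ⟨(a + t / 2, a + t / 2), ?_⟩
  rw [sphere_prod]
  exact union_subset_union (prod_mono hsphere hball) (prod_mono hball hsphere)

lemma coverNum_F_le (k : ℕ) : coverNum F ((4 : ℝ) ^ k)⁻¹ ≤ 4 * 8 ^ k := by
  have hr : (0 : ℝ) < ((4 : ℝ) ^ k)⁻¹ := by positivity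
  have hE : coverNum E ((4 : ℝ) ^ k)⁻¹ ≤ 2 ^ k + 2 ^ k := by
    have h₁ := coverNum_digitSet_le (b := 4) {0, 2} k
    have h₂ := coverNum_digitSet_le (b := 4) {2, 3} k
    rw [Nat.cast_ofNat] at h₁ h₂
    exact (coverNum_union_le (isCompact_digitSet _).totallyBounded
      (isCompact_digitSet _).totallyBounded hr).trans (add_le_add h₁ h₂)
  have hI : coverNum (Icc (0 : ℝ) 1) ((4 : ℝ) ^ k)⁻¹ ≤ 4 ^ k := by
    have := coverNum_digitSet_le (b := 4) Finset.univ k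
    rwa [Finset.coe_univ, digitSet_univ (by norm_num), Nat.cast_ofNat] at this
  have hEtb := isCompact_E.totallyBounded
  have hItb := (isCompact_Icc (a := (0 : ℝ)) (b := 1)).totallyBounded
  have hEI := (isCompact_E.prod (isCompact_Icc (a := (0 : ℝ)) (b := 1))).totallyBounded
  have hIE := ((isCompact_Icc (a := (0 : ℝ)) (b := 1)).prod isCompact_E).totallyBounded
  calc coverNum F ((4 : ℝ) ^ k)⁻¹
      ≤ coverNum E ((4 : ℝ) ^ k)⁻¹ * coverNum (Icc (0 : ℝ) 1) ((4 : ℝ) ^ k)⁻¹ +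
        coverNum (Icc (0 : ℝ) 1) ((4 : ℝ) ^ k)⁻¹ * coverNum E ((4 : ℝ) ^ k)⁻¹ :=
        (coverNum_union_le hEI hIE hr).trans
          (add_le_add (coverNum_prod_le hEtb hItb hr) (coverNum_prod_le hItb hEtb hr))
    _ ≤ (2 ^ k + 2 ^ k) * 4 ^ k + 4 ^ k * (2 ^ k + 2 ^ k) := by gcongr
    _ = 4 * 8 ^ k := by rw [show (8 : ℕ) = 2 * 4 by rfl, mul_pow]; ring

lemma le_coverNum_F {k : ℕ} {r : ℝ} (hr : 0 < r) (hrk : 2 * r < ((4 : ℝ) ^ k)⁻¹) :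
    8 ^ k ≤ coverNum F r := by
  obtain ⟨P, hPE, hPcard, hP⟩ := exists_separated_subset_digitSet (b := 4) {0, 2} (by simp)
    (by decide) k
  obtain ⟨G, hGI, hGcard, hG⟩ := exists_separated_subset_Icc (4 ^ k)
  have hsub : ↑(P ×ˢ G) ⊆ F := by
    rw [Finset.coe_product]
    exact subset_union_left.trans' (prod_mono (hPE.trans subset_union_left) hGI)
  have hsep : (↑(P ×ˢ G) : Set (ℝ × ℝ)).Pairwise fun p q => 2 * r < dist p q := by
    rw [Finset.coe_product]
    push_cast at hP hG
    exact (hP.le_dist_prod hG).imp fun p q h => hrk.trans_le h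
  have := card_le_coverNum isCompact_F.totallyBounded hr hsub hsep
  rwa [Finset.card_product, hPcard, hGcard, Finset.card_pair (by decide), ← mul_pow] at this

lemma tendsto_log_coverNum_F :
    Tendsto (fun r => Real.log (coverNum F r) / -Real.log r) (𝓝[>] 0) (𝓝 (3 / 2)) := by
  have hlog : Real.log 8 / Real.log 4 = 3 / 2 := by
    rw [show (8 : ℝ) = 2 ^ 3 by norm_num, show (4 : ℝ) = 2 ^ 2 by norm_num, Real.log_pow,
      Real.log_pow]
    field_simp [(Real.log_pos one_lt_two).ne']
    norm_num
  rw [← hlog]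
  refine tendsto_log_div_neg_log_of_pow_bounds (C := 4) (by norm_num) (by norm_num)
    (fun k r hkr => ?_) fun k r hr hrk => ?_
  · have := (coverNum_anti isCompact_F.totallyBounded (by positivity) hkr).trans (coverNum_F_le k)
    exact_mod_cast this
  · rw [pow_succ, mul_inv] at hrk
    have h4k : 0 < ((4 : ℝ) ^ k)⁻¹ := by positivity
    exact_mod_cast le_coverNum_F hr (by linarith)

end SquareBoundarySet

/-- There is a compact planar set of box dimension exactly `3/2`
containing the boundary of an axis-aligned square of every side length in `(0,1)`. -/
theorem exists_compact_boxDim_three_halves_with_all_squares :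
    ∃ F : Set (ℝ × ℝ), IsCompact F ∧ lowerBoxDim F = 3/2 ∧ upperBoxDim F = 3/2 ∧
      ∀ t ∈ Set.Ioo (0:ℝ) 1, ∃ c : ℝ × ℝ, {y : ℝ × ℝ | ‖y - c‖ = t / 2} ⊆ F := by
  refine ⟨SquareBoundarySet.F, SquareBoundarySet.isCompact_F,
    SquareBoundarySet.tendsto_log_coverNum_F.liminf_eq,
    SquareBoundarySet.tendsto_log_coverNum_F.limsup_eq, fun t ht => ?_⟩
  obtain ⟨c, hc⟩ := SquareBoundarySet.exists_sphere_subset_F (Ioo_subset_Icc_self ht)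
  exact ⟨c, fun y hy => hc (mem_sphere_iff_norm.2 hy)⟩
end

section
/- For every ε > 0 and n ≥ 2 there exists a compact set G ⊆ ℝ^n with Assouad dimension at most n − 1/2 + ε such that for every t ∈ (0,1), G contains the boundary of an axis-aligned cube of side length t. -/
open Set Metric MeasureTheory Filter Topology
open scoped ENNReal

/-!
Let `K` be the closure of the terminating base-4 expansions whose digits all sit in odd places.
Splitting every base-16 digit as `4 d + e` shows `[0, 1) ⊆ K + K / 4`, so for each `t ∈ (0, 1)` the
set `F = K ∪ (-1/4) • K` contains two points `u` and `u - t`, and the boundary of the cube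
`[u - t, u]ⁿ` lies in the union of the slabs `{y | yᵢ ∈ F}` inside `[-1, 1]ⁿ`.

`K` consists of four copies of `K / 16` separated by gaps of length `1 / 5`. A ball of radius
`R < 1 / 16` therefore meets only one copy, and rescaling by `16` reduces the count of `r`-balls
needed to cover `K ∩ closedBall a R` to the case `R ≥ 1 / 16`, where covering all of `K` takes
`O(r ^ (-1/2))` balls. Hence these counts are `O((R / r) ^ (1/2))`; they multiply over the
coordinates of a slab, which gives the exponent `1/2 + (n - 1)`.
-/

open scoped Pointwise

/-- The covering condition in `assouadDim`, for all centers and with explicit finite covers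
(`coverNum` is `0` when no finite cover exists). -/
def HasAssouadBound {X : Type*} [PseudoMetricSpace X] (E : Set X) (s : ℝ) : Prop :=
  ∃ C : ℝ, ∀ a : X, ∀ R r : ℝ, 0 < r → r < R → ∃ t : Finset X,
    (t.card : ℝ) ≤ C * (R / r) ^ s ∧ E ∩ closedBall a R ⊆ ⋃ c ∈ t, closedBall c r

theorem image_subset_biUnion_closedBall {X Y : Type*} [PseudoMetricSpace X] [PseudoMetricSpace Y]
    [DecidableEq Y] {f : X → Y} {k r : ℝ} (hf : ∀ x y, dist (f x) (f y) ≤ k * dist x y)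
    (hk : 0 ≤ k) {E : Set X} {t : Finset X} (hE : E ⊆ ⋃ c ∈ t, closedBall c r) :
    f '' E ⊆ ⋃ c ∈ t.image f, closedBall c (k * r) := by
  rintro _ ⟨x, hx, rfl⟩
  obtain ⟨c, hc, hxc⟩ := mem_iUnion₂.1 (hE hx)
  exact mem_iUnion₂.2 ⟨f c, Finset.mem_image_of_mem f hc,
    (hf x c).trans (mul_le_mul_of_nonneg_left hxc hk)⟩

theorem coverNum_le_card_s12 {X : Type*} [PseudoMetricSpace X] {F : Set X} {r : ℝ} (t : Finset X)
    (h : F ⊆ ⋃ x ∈ t, closedBall x r) : coverNum F r ≤ t.card :=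
  Nat.sInf_le ⟨t, rfl, h⟩

namespace HasAssouadBound

section PseudoMetricSpace

variable {X : Type*} [PseudoMetricSpace X] {E E' : Set X} {s : ℝ}

theorem assouadDim_le (h : HasAssouadBound E s) (hs : 0 ≤ s) : assouadDim E ≤ s := by
  obtain ⟨C, hC⟩ := h
  unfold assouadDim
  refine csInf_le ⟨0, fun _ h => h.1⟩ ?_
  refine ⟨hs, max C 1, lt_max_of_lt_right one_pos, fun x _ R _ r hr hrR => ?_⟩
  obtain ⟨t, ht, hcover⟩ := hC x R r hr hrR
  calc (coverNum (E ∩ closedBall x R) r : ℝ) ≤ t.card := by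
        exact_mod_cast coverNum_le_card_s12 t hcover
    _ ≤ C * (R / r) ^ s := ht
    _ ≤ max C 1 * (R / r) ^ s := by gcongr; exact le_max_left C 1

theorem mono (h : HasAssouadBound E s) (hE : E' ⊆ E) : HasAssouadBound E' s := by
  obtain ⟨C, hC⟩ := h
  refine ⟨C, fun a R r hr hrR => ?_⟩
  obtain ⟨t, ht, hcover⟩ := hC a R r hr hrR
  exact ⟨t, ht, (inter_subset_inter_left _ hE).trans hcover⟩

theorem iUnion {ι : Type*} [Fintype ι] {E : ι → Set X} (h : ∀ i, HasAssouadBound (E i) s) :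
    HasAssouadBound (⋃ i, E i) s := by
  classical
  choose C hC using h
  refine ⟨∑ i, C i, fun a R r hr hrR => ?_⟩
  choose t ht hcover using fun i => hC i a R r hr hrR
  refine ⟨Finset.univ.biUnion t, ?_, ?_⟩
  · calc ((Finset.univ.biUnion t).card : ℝ) ≤ ∑ i, ((t i).card : ℝ) := by
          exact_mod_cast Finset.card_biUnion_le
      _ ≤ ∑ i, C i * (R / r) ^ s := Finset.sum_le_sum fun i _ => ht i
      _ = (∑ i, C i) * (R / r) ^ s := (Finset.sum_mul _ _ _).symm
  · rw [iUnion_inter]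
    refine iUnion_subset fun i y hy => ?_
    obtain ⟨c, hc, hyc⟩ := mem_iUnion₂.1 (hcover i hy)
    exact mem_iUnion₂.2 ⟨c, Finset.mem_biUnion.2 ⟨i, Finset.mem_univ i, hc⟩, hyc⟩

theorem union {E₁ E₂ : Set X} (h₁ : HasAssouadBound E₁ s) (h₂ : HasAssouadBound E₂ s) :
    HasAssouadBound (E₁ ∪ E₂) s := by
  rw [union_eq_iUnion]
  exact iUnion fun b => by cases b <;> assumption

theorem closure (h : HasAssouadBound E s) : HasAssouadBound (_root_.closure E) s := by
  obtain ⟨C, hC⟩ := h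
  refine ⟨C * 2 ^ s, fun a R r hr hrR => ?_⟩
  obtain ⟨t, ht, hcover⟩ := hC a (2 * R) r hr (by linarith)
  rw [mul_div_assoc, Real.mul_rpow zero_le_two (div_pos (hr.trans hrR) hr).le, ← mul_assoc] at ht
  refine ⟨t, ht, fun x ⟨hxE, hxa⟩ => ?_⟩
  -- points of `E` near `x` lie in `closedBall a (2 * R)`, whose cover is closed
  refine closure_minimal hcover
    (t.finite_toSet.isClosed_biUnion fun c _ => isClosed_closedBall) ?_
  rw [Metric.mem_closure_iff] at hxE ⊢
  intro δ hδ
  obtain ⟨y, hy, hxy⟩ := hxE (min δ R) (lt_min hδ (hr.trans hrR))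
  refine ⟨y, ⟨hy, ?_⟩, hxy.trans_le (min_le_left _ _)⟩
  calc dist y a ≤ dist x y + dist x a := dist_triangle_left y a x
    _ ≤ 2 * R := by linarith [min_le_right δ R, mem_closedBall.1 hxa]

end PseudoMetricSpace

theorem smul {𝕜 V : Type*} [NormedField 𝕜] [NormedAddCommGroup V] [NormedSpace 𝕜 V]
    {E : Set V} {s : ℝ} (h : HasAssouadBound E s) {c : 𝕜} (hc : c ≠ 0) :
    HasAssouadBound (c • E) s := by
  classical
  obtain ⟨C, hC⟩ := h
  have hc' : 0 < ‖c‖ := norm_pos_iff.2 hc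
  refine ⟨C, fun a R r hr hrR => ?_⟩
  obtain ⟨t, ht, hcover⟩ :=
    hC (c⁻¹ • a) (R / ‖c‖) (r / ‖c‖) (by positivity) (by gcongr)
  refine ⟨t.image (c • ·), ?_, ?_⟩
  · calc ((t.image (c • ·)).card : ℝ) ≤ t.card := by exact_mod_cast Finset.card_image_le
      _ ≤ C * (R / r) ^ s := by rwa [div_div_div_cancel_right₀ hc'.ne'] at ht
  · have himage := image_subset_biUnion_closedBall (f := (c • ·))
      (fun x y => (dist_smul₀ c x y).le) (norm_nonneg c) hcover
    rw [mul_div_cancel₀ _ hc'.ne'] at himage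
    refine Subset.trans ?_ himage
    rintro _ ⟨⟨y, hy, rfl⟩, hya⟩
    refine ⟨y, ⟨hy, ?_⟩, rfl⟩
    rw [mem_closedBall, le_div_iff₀ hc', mul_comm, ← dist_smul₀, smul_inv_smul₀ hc]
    exact hya

theorem pi {ι : Type*} [Fintype ι] {X : ι → Type*} [∀ i, PseudoMetricSpace (X i)]
    {E : ∀ i, Set (X i)} {s : ι → ℝ} (h : ∀ i, HasAssouadBound (E i) (s i)) :
    HasAssouadBound (univ.pi E) (∑ i, s i) := by
  classical
  choose C hC using h
  refine ⟨∏ i, C i, fun a R r hr hrR => ?_⟩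
  choose t ht hcover using fun i => hC i (a i) R r hr hrR
  refine ⟨Fintype.piFinset t, ?_, ?_⟩
  · rw [Fintype.card_piFinset, Nat.cast_prod, Real.rpow_sum_of_pos (div_pos (hr.trans hrR) hr),
      ← Finset.prod_mul_distrib]
    exact Finset.prod_le_prod (fun i _ => Nat.cast_nonneg _) fun i _ => ht i
  · rw [closedBall_pi a (hr.trans hrR).le, ← pi_inter_distrib]
    intro y hy
    choose c hc hyc using fun i => mem_iUnion₂.1 (hcover i (hy i (mem_univ i)))
    exact mem_iUnion₂.2 ⟨c, Fintype.mem_piFinset.2 hc, (dist_pi_le_iff hr.le).2 hyc⟩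

end HasAssouadBound

theorem hasAssouadBound_univ_real : HasAssouadBound (univ : Set ℝ) 1 := by
  refine ⟨3, fun a R r hr hrR => ?_⟩
  refine ⟨(Finset.range (⌊2 * R / r⌋₊ + 1)).image fun i : ℕ => a - R + r * i, ?_, ?_⟩
  · have hRr : 1 ≤ R / r := (one_le_div hr).2 hrR.le
    calc (((Finset.range (⌊2 * R / r⌋₊ + 1)).image fun i : ℕ => a - R + r * i).card : ℝ)
        ≤ ⌊2 * R / r⌋₊ + 1 := by
          exact_mod_cast Finset.card_image_le.trans (Finset.card_range _).le
      _ ≤ 2 * (R / r) + 1 := by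
          rw [← mul_div_assoc]
          linarith [Nat.floor_le (show (0:ℝ) ≤ 2 * R / r from (div_pos (by linarith) hr).le)]
      _ ≤ 3 * (R / r) ^ (1 : ℝ) := by rw [Real.rpow_one]; linarith
  · rintro y ⟨-, hy⟩
    rw [mem_closedBall, Real.dist_eq, abs_le] at hy
    have hi := Nat.floor_le (div_nonneg (by linarith : 0 ≤ y - (a - R)) hr.le)
    have hi' := Nat.lt_floor_add_one ((y - (a - R)) / r)
    have hiR : ⌊(y - (a - R)) / r⌋₊ ≤ ⌊2 * R / r⌋₊ := Nat.floor_le_floor (by gcongr; linarith)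
    rw [le_div_iff₀ hr] at hi
    rw [div_lt_iff₀ hr] at hi'
    refine mem_iUnion₂.2
      ⟨_, Finset.mem_image_of_mem _ (Finset.mem_range.2 (Nat.lt_succ_of_le hiR)), ?_⟩
    rw [mem_closedBall, Real.dist_eq, abs_le]
    constructor <;> nlinarith

theorem HasAssouadBound.preimage_eval {ι : Type*} [Fintype ι] {E : Set ℝ} {s : ℝ}
    (h : HasAssouadBound E s) (i : ι) :
    HasAssouadBound ((fun y : ι → ℝ => y i) ⁻¹' E) (s + (Fintype.card ι - 1)) := by
  classical
  have hexp : ∑ j, Function.update (fun _ => (1 : ℝ)) i s j = s + (Fintype.card ι - 1) := by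
    rw [Finset.sum_update_of_mem (Finset.mem_univ i), Finset.sum_const, Finset.card_univ_sdiff,
      Finset.card_singleton, nsmul_one, Nat.cast_sub (Fintype.card_pos_iff.2 ⟨i⟩), Nat.cast_one]
  rw [← hexp]
  refine (HasAssouadBound.pi fun j => ?_).mono (eval_preimage (α := fun _ => ℝ)).le
  rcases eq_or_ne j i with rfl | hj
  · simpa using h
  · simpa [hj] using hasAssouadBound_univ_real

theorem Ico_subset_closure_div_pow {b : ℕ} (hb : 1 < b) :
    Ico (0 : ℝ) 1 ⊆ closure {x | ∃ m k : ℕ, k < b ^ m ∧ x = k / b ^ m} := by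
  rintro t ⟨ht₀, ht₁⟩
  rw [Metric.mem_closure_iff]
  intro ε hε
  have hb' : (1 : ℝ) < b := by exact_mod_cast hb
  obtain ⟨m, hm⟩ := exists_pow_lt_of_lt_one hε (inv_lt_one_of_one_lt₀ hb')
  have hbm : (0 : ℝ) < b ^ m := by positivity
  refine ⟨⌊t * b ^ m⌋₊ / b ^ m, ⟨m, _, ?_, rfl⟩, ?_⟩
  · exact_mod_cast Nat.floor_lt (by positivity) |>.2 (by push_cast; nlinarith)
  · have h₁ := Nat.floor_le (by positivity : 0 ≤ t * b ^ m)
    have h₂ := Nat.lt_floor_add_one (t * b ^ m)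
    rw [inv_pow] at hm
    rw [Real.dist_eq, abs_of_nonneg (by rw [sub_nonneg, div_le_iff₀ hbm]; exact h₁)]
    calc t - ⌊t * b ^ m⌋₊ / b ^ m < 1 / b ^ m := by
          rw [sub_lt_iff_lt_add, ← add_div, lt_div_iff₀ hbm]; linarith
      _ < ε := by rwa [one_div]

/-- The finite sums `∑ j < m, aⱼ 4 ^ (-(2 j + 1))` with digits `aⱼ < 4`, i.e. the terminating
base-4 expansions whose nonzero digits all sit in odd places. -/
inductive oddDigitSums : Set ℝ
  | zero : oddDigitSums 0
  | cons {d : ℕ} {x : ℝ} : d < 4 → oddDigitSums x → oddDigitSums (d / 4 + x / 16)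

namespace oddDigitSums

theorem subset_Icc : oddDigitSums ⊆ Icc 0 (4 / 5) := by
  intro x hx
  induction hx with
  | zero => norm_num
  | @cons d x hd _ ih =>
    have hd' : (d : ℝ) ≤ 3 := by exact_mod_cast Nat.le_of_lt_succ hd
    constructor
    · have := ih.1; positivity
    · linarith [ih.2]

theorem subset_closedBall : oddDigitSums ⊆ closedBall (2 / 5) (2 / 5) := fun x hx => by
  have := subset_Icc hx
  rw [mem_closedBall, Real.dist_eq, abs_le]
  constructor <;> linarith [this.1, this.2]

theorem exists_eq_cons {x : ℝ} (hx : x ∈ oddDigitSums) :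
    ∃ d : ℕ, d < 4 ∧ ∃ y ∈ oddDigitSums, x = d / 4 + y / 16 := by
  cases hx with
  | zero => exact ⟨0, by norm_num, 0, zero, by norm_num⟩
  | cons hd hy => exact ⟨_, hd, _, hy, rfl⟩

-- the four pieces `d / 4 + oddDigitSums / 16` lie in `[d / 4, d / 4 + 1 / 20]`
theorem digit_eq_of_dist_lt {d e : ℕ} {y z : ℝ} (hy : y ∈ oddDigitSums) (hz : z ∈ oddDigitSums)
    (h : dist (d / 4 + y / 16) (e / 4 + z / 16) < 1 / 5) : d = e := by
  obtain ⟨hy₀, hy₁⟩ := subset_Icc hy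
  obtain ⟨hz₀, hz₁⟩ := subset_Icc hz
  rw [Real.dist_eq, abs_lt] at h
  rcases lt_trichotomy d e with hde | rfl | hde
  · have : (d : ℝ) + 1 ≤ e := by exact_mod_cast hde
    linarith
  · rfl
  · have : (e : ℝ) + 1 ≤ d := by exact_mod_cast hde
    linarith

theorem image_cons_subset_biUnion (d : ℕ) {E : Set ℝ} {t : Finset ℝ} {r : ℝ}
    (h : E ⊆ ⋃ c ∈ t, closedBall c (16 * r)) :
    (fun y : ℝ => d / 4 + y / 16) '' E ⊆ ⋃ c ∈ t.image fun y : ℝ => d / 4 + y / 16,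
      closedBall c r := by
  have hdist (y z : ℝ) : dist (d / 4 + y / 16) (d / 4 + z / 16) ≤ 1 / 16 * dist y z := by
    refine le_of_eq ?_
    rw [Real.dist_eq, Real.dist_eq, ← abs_of_pos (by norm_num : (0 : ℝ) < 1 / 16), ← abs_mul]
    congr 1
    ring
  simpa [← mul_assoc] using image_subset_biUnion_closedBall hdist (by norm_num) h

theorem exists_finset_cover {r : ℝ} (hr : 0 < r) :
    ∃ t : Finset ℝ, (t.card : ℝ) ^ 2 ≤ max 1 (16 / r) ∧ oddDigitSums ⊆ ⋃ c ∈ t, closedBall c r := by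
  have one_ball (r : ℝ) (hr : 2 / 5 ≤ r) : ∃ t : Finset ℝ,
      (t.card : ℝ) ^ 2 ≤ max 1 (16 / r) ∧ oddDigitSums ⊆ ⋃ c ∈ t, closedBall c r :=
    ⟨{2 / 5}, by simp, by simpa using subset_closedBall.trans (closedBall_subset_closedBall hr)⟩
  obtain ⟨n, hn⟩ := exists_pow_lt_of_lt_one hr (by norm_num : (1 / 16 : ℝ) < 1)
  induction n generalizing r with
  | zero => exact one_ball r (by norm_num at hn; linarith)
  | succ n ih =>
    rcases le_or_gt 1 r with hr₁ | hr₁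
    · exact one_ball r (by linarith)
    obtain ⟨t, ht, hcover⟩ := ih (r := 16 * r) (by positivity) (by rw [pow_succ] at hn; linarith)
    refine ⟨(Finset.range 4).biUnion fun d => t.image fun y => (d : ℝ) / 4 + y / 16, ?_, ?_⟩
    · have hcard : ((Finset.range 4).biUnion fun d => t.image fun y => (d : ℝ) / 4 + y / 16).card
          ≤ 4 * t.card :=
        Finset.card_biUnion_le.trans <| (Finset.sum_le_sum fun d _ => Finset.card_image_le).trans_eq
          (by rw [Finset.sum_const, Finset.card_range, smul_eq_mul])
      rw [div_mul_cancel_left₀ (by norm_num : (16 : ℝ) ≠ 0),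
        max_eq_right ((one_le_inv₀ hr).2 hr₁.le)] at ht
      calc _ ≤ ((4 * t.card : ℕ) : ℝ) ^ 2 := by gcongr
        _ ≤ 16 / r := by rw [div_eq_mul_inv]; push_cast; nlinarith
        _ ≤ max 1 (16 / r) := le_max_right _ _
    · intro x hx
      obtain ⟨d, hd, y, hy, rfl⟩ := exists_eq_cons hx
      obtain ⟨c, hc, hxc⟩ := mem_iUnion₂.1 (image_cons_subset_biUnion d hcover ⟨y, hy, rfl⟩)
      exact mem_iUnion₂.2 ⟨c, Finset.mem_biUnion.2 ⟨d, Finset.mem_range.2 hd, hc⟩, hxc⟩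

theorem inter_closedBall_subset_image {a R : ℝ} (hR : R < 1 / 16) : ∃ d : ℕ,
    oddDigitSums ∩ closedBall a R ⊆
      (fun y => d / 4 + y / 16) '' (oddDigitSums ∩ closedBall (16 * (a - d / 4)) (16 * R)) := by
  rcases (oddDigitSums ∩ closedBall a R).eq_empty_or_nonempty with h | ⟨x₀, hx₀, hx₀a⟩
  · exact ⟨0, h ▸ empty_subset _⟩
  obtain ⟨d, -, y₀, hy₀, rfl⟩ := exists_eq_cons hx₀
  refine ⟨d, fun x ⟨hx, hxa⟩ => ?_⟩
  obtain ⟨e, -, y, hy, rfl⟩ := exists_eq_cons hx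
  obtain rfl : e = d := digit_eq_of_dist_lt hy hy₀ <| by
    linarith [dist_triangle_right (e / 4 + y / 16 : ℝ) (d / 4 + y₀ / 16) a,
      mem_closedBall.1 hxa, mem_closedBall.1 hx₀a]
  refine ⟨y, ⟨hy, ?_⟩, rfl⟩
  rw [mem_closedBall, Real.dist_eq] at hxa ⊢
  calc |y - 16 * (a - e / 4)| = 16 * |e / 4 + y / 16 - a| := by
        rw [← abs_of_pos (by norm_num : (0 : ℝ) < 16), ← abs_mul]; ring_nf
    _ ≤ 16 * R := by linarith

theorem exists_finset_cover_inter_closedBall (a : ℝ) {R r : ℝ} (hr : 0 < r) (hrR : r < R) :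
    ∃ t : Finset ℝ, (t.card : ℝ) ^ 2 ≤ 256 * (R / r) ∧
      oddDigitSums ∩ closedBall a R ⊆ ⋃ c ∈ t, closedBall c r := by
  have large_radius (a R r : ℝ) (hr : 0 < r) (hrR : r < R) (hR : 1 / 16 ≤ R) : ∃ t : Finset ℝ,
      (t.card : ℝ) ^ 2 ≤ 256 * (R / r) ∧
        oddDigitSums ∩ closedBall a R ⊆ ⋃ c ∈ t, closedBall c r := by
    obtain ⟨t, ht, hcover⟩ := exists_finset_cover hr
    refine ⟨t, ht.trans (max_le ?_ ?_), inter_subset_left.trans hcover⟩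
    · linarith [(one_le_div hr).2 hrR.le]
    · rw [mul_div_assoc']
      gcongr
      linarith
  obtain ⟨n, hn⟩ := exists_pow_lt_of_lt_one (by linarith : 0 < 16 * R)
    (by norm_num : (1 / 16 : ℝ) < 1)
  induction n generalizing a R r with
  | zero => exact large_radius a R r hr hrR (by norm_num at hn; linarith)
  | succ n ih =>
    rcases le_or_gt (1 / 16) R with hR | hR
    · exact large_radius a R r hr hrR hR
    obtain ⟨d, hd⟩ := inter_closedBall_subset_image (a := a) hR
    obtain ⟨t, ht, hcover⟩ := ih (a := 16 * (a - d / 4)) (R := 16 * R) (r := 16 * r)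
      (by positivity) (by linarith) (by rw [pow_succ] at hn; linarith)
    rw [mul_div_mul_left _ _ (by norm_num : (16 : ℝ) ≠ 0)] at ht
    refine ⟨t.image fun y : ℝ => d / 4 + y / 16, le_trans ?_ ht,
      hd.trans (image_cons_subset_biUnion d hcover)⟩
    exact pow_le_pow_left₀ (Nat.cast_nonneg _) (Nat.cast_le.2 Finset.card_image_le) 2

theorem hasAssouadBound : HasAssouadBound oddDigitSums (1 / 2) := by
  refine ⟨16, fun a R r hr hrR => ?_⟩
  obtain ⟨t, ht, hcover⟩ := exists_finset_cover_inter_closedBall a hr hrR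
  refine ⟨t, ?_, hcover⟩
  rw [← Real.sqrt_eq_rpow, show (16 : ℝ) = √256 by
    rw [show (256 : ℝ) = 16 ^ 2 by norm_num, Real.sqrt_sq (by norm_num)],
    ← Real.sqrt_mul (by norm_num)]
  exact (Real.le_sqrt (Nat.cast_nonneg _) (by positivity [(hr.trans hrR).le])).2 ht

-- split the leading base-16 digit of `k` as `4 d + e`
theorem div_pow_mem_add_smul {m k : ℕ} (hk : k < 16 ^ m) :
    (k / 16 ^ m : ℝ) ∈ oddDigitSums + (1 / 4 : ℝ) • oddDigitSums := by
  induction m generalizing k with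
  | zero => exact ⟨0, zero, 0, ⟨0, zero, by norm_num⟩, by simp_all⟩
  | succ m ih =>
    obtain ⟨u, hu, _, ⟨v, hv, rfl⟩, huv⟩ := ih (Nat.mod_lt k (by positivity))
    have hq : k / 16 ^ m < 16 := Nat.div_lt_of_lt_mul (by rwa [← pow_succ])
    have hk' : (k : ℝ) = 16 ^ m * (4 * (k / 16 ^ m / 4 : ℕ) + (k / 16 ^ m % 4 : ℕ))
        + (k % 16 ^ m : ℕ) := by
      exact_mod_cast by rw [Nat.div_add_mod (k / 16 ^ m) 4, Nat.div_add_mod]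
    refine ⟨_, cons (d := k / 16 ^ m / 4) (by omega) hu, _,
      ⟨_, cons (d := k / 16 ^ m % 4) (by omega) hv, rfl⟩, ?_⟩
    rw [eq_div_iff (by positivity)] at huv
    rw [hk', ← huv, pow_succ]
    field_simp
    ring

theorem isCompact_closure : IsCompact (closure oddDigitSums) :=
  (Metric.isBounded_Icc (0 : ℝ) (4 / 5)).subset subset_Icc |>.isCompact_closure

theorem closure_subset_Icc : closure oddDigitSums ⊆ Icc 0 (4 / 5) :=
  closure_minimal subset_Icc isClosed_Icc

theorem Ico_subset_add_smul_closure :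
    Ico (0 : ℝ) 1 ⊆ closure oddDigitSums + (1 / 4 : ℝ) • closure oddDigitSums := by
  refine (Ico_subset_closure_div_pow (b := 16) (by norm_num)).trans (closure_minimal ?_
    (isCompact_closure.add (isCompact_closure.smul _)).isClosed)
  rintro _ ⟨m, k, hk, rfl⟩
  exact add_subset_add subset_closure (smul_set_mono subset_closure)
    (by exact_mod_cast div_pow_mem_add_smul hk)

end oddDigitSums

def diffGenerator : Set ℝ := closure oddDigitSums ∪ (-(1 / 4) : ℝ) • closure oddDigitSums

theorem isCompact_diffGenerator : IsCompact diffGenerator :=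
  oddDigitSums.isCompact_closure.union (oddDigitSums.isCompact_closure.smul _)

theorem hasAssouadBound_diffGenerator : HasAssouadBound diffGenerator (1 / 2) :=
  oddDigitSums.hasAssouadBound.closure.union
    (oddDigitSums.hasAssouadBound.closure.smul (by norm_num))

theorem exists_mem_diffGenerator_sub_mem {t : ℝ} (ht : t ∈ Ioo (0 : ℝ) 1) :
    ∃ u ∈ Icc (0 : ℝ) 1, u ∈ diffGenerator ∧ u - t ∈ diffGenerator := by
  obtain ⟨u, hu, _, ⟨v, hv, rfl⟩, rfl⟩ :=
    oddDigitSums.Ico_subset_add_smul_closure (Ioo_subset_Ico_self ht)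
  have hu' := oddDigitSums.closure_subset_Icc hu
  refine ⟨u, ⟨hu'.1, by linarith [hu'.2]⟩, Or.inl hu, Or.inr ⟨v, hv, ?_⟩⟩
  simp only [smul_eq_mul]
  ring

def cubeSlabs (F : Set ℝ) (ι : Type*) [Fintype ι] : Set (ι → ℝ) :=
  closedBall 0 1 ∩ ⋃ i, (fun y => y i) ⁻¹' F

theorem isCompact_cubeSlabs {F : Set ℝ} (hF : IsClosed F) (ι : Type*) [Fintype ι] :
    IsCompact (cubeSlabs F ι) :=
  (isCompact_closedBall 0 1).inter_right
    (isClosed_iUnion_of_finite fun i => hF.preimage (continuous_apply i))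

theorem HasAssouadBound.cubeSlabs {F : Set ℝ} {s : ℝ} (h : HasAssouadBound F s) (ι : Type*)
    [Fintype ι] : HasAssouadBound (cubeSlabs F ι) (s + (Fintype.card ι - 1)) :=
  (iUnion fun i => h.preimage_eval i).mono inter_subset_right

theorem sphere_subset_cubeSlabs {ι : Type*} [Fintype ι] {F : Set ℝ} {u t : ℝ} (hu : u ∈ F)
    (hut : u - t ∈ F) (ht : 0 < t) (hu₁ : u ≤ 1) (hut₁ : -1 ≤ u - t) :
    {y : ι → ℝ | ‖y - fun _ => u - t / 2‖ = t / 2} ⊆ cubeSlabs F ι := by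
  intro y hy
  have hcoord (i : ι) : |y i - (u - t / 2)| ≤ t / 2 := (norm_le_pi_norm _ i).trans_eq hy
  refine ⟨mem_closedBall_zero_iff.2 ((pi_norm_le_iff_of_nonneg zero_le_one).2 fun i => ?_), ?_⟩
  · have := abs_le.1 (hcoord i)
    rw [Real.norm_eq_abs, abs_le]
    constructor <;> linarith
  obtain ⟨i, hi⟩ : ∃ i, |y i - (u - t / 2)| = t / 2 := by
    by_contra! h
    refine (pi_norm_lt_iff (half_pos ht)).2 (fun i => ?_) |>.ne hy
    simpa using (hcoord i).lt_of_ne (h i)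
  refine mem_iUnion.2 ⟨i, ?_⟩
  rcases (abs_eq (half_pos ht).le).1 hi with h | h
  · rw [mem_preimage, show y i = u by linarith]
    exact hu
  · rw [mem_preimage, show y i = u - t by linarith]
    exact hut

/-- For every `ε > 0` and `n ≥ 2` there is a compact set of Assouad
dimension at most `n - 1/2 + ε` containing boundaries of axis-aligned cubes of every
side length in `(0,1)`. -/
theorem exists_compact_assouad_cube_packing (ε : ℝ) (hε : 0 < ε) (n : ℕ) (hn : 2 ≤ n) :
    ∃ G : Set (Fin n → ℝ), IsCompact G ∧ assouadDim G ≤ (n : ℝ) - 1/2 + ε ∧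
      ∀ t ∈ Set.Ioo (0:ℝ) 1, ∃ c : Fin n → ℝ, {y : Fin n → ℝ | ‖y - c‖ = t / 2} ⊆ G := by
  refine ⟨cubeSlabs diffGenerator (Fin n),
    isCompact_cubeSlabs isCompact_diffGenerator.isClosed _, ?_, fun t ht => ?_⟩
  · have hn' : (2 : ℝ) ≤ n := by exact_mod_cast hn
    have hdim := (hasAssouadBound_diffGenerator.cubeSlabs (Fin n)).assouadDim_le
      (by rw [Fintype.card_fin]; linarith)
    rw [Fintype.card_fin] at hdim
    linarith
  · obtain ⟨u, hu₁, hu, hut⟩ := exists_mem_diffGenerator_sub_mem ht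
    exact ⟨_, sphere_subset_cubeSlabs hu hut ht.1 hu₁.2 (by linarith [hu₁.1, ht.2])⟩
end
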